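/- (Lower bound on the prox-gradient displacement under a biased gradient) In the biased-oracle setting, fix a constant 0 < η ≤ 2/L, a point y ∈ E, and a vector v ∈ E satisfying ‖v − ∇f(y)‖ ≤ B·‖y − x̄‖. Define y⁺ = prox_{ηr}(y − η·v) and the displacement g̃ = (y − y⁺)/η, and set α̂ := α − 2B. Then ‖g̃‖ ≥ (α̂/(2(1 + ηB)))·‖y − x̄‖. -/

import Mathlib

/-!
The optimality of `x̄` for `f + r` and of `y⁺` for the prox problem are variational
inequalities, `-∇f(x̄) ∈ ∂r(x̄)` and `(y - ηv - y⁺)/η ∈ ∂r(y⁺)`; monotonicity of `∂r` gives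
`0 ≤ ⟪d - η(e + w), u - d⟫` with `d = y - y⁺`, `u = y - x̄`, `e = v - ∇f(y)` and
`w = ∇f(y) - ∇f(x̄)`. Strong convexity gives `α‖u‖² ≤ ⟪w, u⟫`, and convexity with an
`L`-Lipschitz gradient gives cocoercivity `‖w‖² ≤ L⟪w, u⟫`, which for `ηL ≤ 2` absorbs the term
`η⟪w, d⟫` into `‖d‖² + (η/2)⟪w, u⟫`. What remains is a quadratic inequality in `‖u‖` and `‖d‖`.
-/

open Set AffineMap
open scoped RealInnerProductSpace

section

variable {E : Type*} [NormedAddCommGroup E] [InnerProductSpace ℝ E]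

def IsProxPoint (r : E → ℝ) (η : ℝ) (w p : E) : Prop :=
  ∀ u, r p + 1 / (2 * η) * ‖p - w‖ ^ 2 ≤ r u + 1 / (2 * η) * ‖u - w‖ ^ 2

variable [CompleteSpace E]

theorem HasGradientAt.sub {f g : E → ℝ} {f' g' x : E} (hf : HasGradientAt f f' x)
    (hg : HasGradientAt g g' x) : HasGradientAt (fun z => f z - g z) (f' - g') x := by
  rw [hasGradientAt_iff_hasFDerivAt, map_sub]
  exact HasFDerivAt.sub hf hg

theorem hasGradientAt_const_mul_norm_sub_sq (c : ℝ) (w x : E) :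
    HasGradientAt (fun z => c * ‖z - w‖ ^ 2) ((2 * c) • (x - w)) x := by
  rw [hasGradientAt_iff_hasFDerivAt]
  refine ((((hasFDerivAt_id x).sub_const w).norm_sq).const_mul c).congr_fderiv ?_
  ext d
  simp only [id_eq, map_sub, ContinuousLinearMap.comp_id, smul_apply,
    sub_apply, coe_innerSL_apply, nsmul_eq_mul, Nat.cast_ofNat, smul_eq_mul,
    map_smul, InnerProductSpace.toDual_apply_apply]
  ring

theorem HasGradientAt.hasDerivAt_comp_lineMap {f : E → ℝ} {g x y : E} {t : ℝ}
    (hf : HasGradientAt f g (lineMap x y t)) :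
    HasDerivAt (fun s => f (lineMap x y s)) ⟪g, y - x⟫ t :=
  ((hasGradientAt_iff_hasFDerivAt.1 hf).comp_hasDerivAt t hasDerivAt_lineMap).congr_deriv
    (InnerProductSpace.toDual_apply_apply ..)

section Convex

variable {s : Set E} {f : E → ℝ} {a b g₁ g₂ : E}

theorem ConvexOn.inner_gradient_le_sub (hf : ConvexOn ℝ s f) (ha : a ∈ s) (hb : b ∈ s)
    (hg : HasGradientAt f g₁ a) : ⟪g₁, b - a⟫ ≤ f b - f a := by
  have := (hf.comp_affineMap (lineMap a b)).le_slope_of_hasDerivAt (x := 0) (y := 1)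
    (by simpa using ha) (by simpa using hb) zero_lt_one
    ((lineMap_apply_zero a b (k := ℝ)).symm ▸ hg).hasDerivAt_comp_lineMap
  simpa [slope] using this

theorem ConvexOn.inner_gradient_sub_nonneg (hf : ConvexOn ℝ s f) (ha : a ∈ s) (hb : b ∈ s)
    (hg₁ : HasGradientAt f g₁ a) (hg₂ : HasGradientAt f g₂ b) : 0 ≤ ⟪g₁ - g₂, a - b⟫ := by
  have hab := hf.inner_gradient_le_sub ha hb hg₁
  have hba := hf.inner_gradient_le_sub hb ha hg₂
  rw [← neg_sub a b, inner_neg_right] at hab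
  rw [inner_sub_left]
  linarith

theorem StrongConvexOn.mul_sq_norm_sub_le_inner_gradient_sub {m : ℝ}
    (hf : StrongConvexOn s m f) (ha : a ∈ s) (hb : b ∈ s) (hg₁ : HasGradientAt f g₁ a)
    (hg₂ : HasGradientAt f g₂ b) : m * ‖a - b‖ ^ 2 ≤ ⟪g₁ - g₂, a - b⟫ := by
  have hgrad {x g : E} (hg : HasGradientAt f g x) :
      HasGradientAt (fun z => f z - m / 2 * ‖z‖ ^ 2) (g - m • x) x := by
    simpa [mul_div_cancel₀ m two_ne_zero] using
      hg.sub (hasGradientAt_const_mul_norm_sub_sq (m / 2) 0 x)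
  have := (strongConvexOn_iff_convex.1 hf).inner_gradient_sub_nonneg ha hb (hgrad hg₁)
    (hgrad hg₂)
  rw [show g₁ - m • a - (g₂ - m • b) = (g₁ - g₂) - m • (a - b) by module, inner_sub_left,
    real_inner_smul_left, real_inner_self_eq_norm_sq] at this
  linarith

theorem IsMinOn.sub_le_inner_gradient {r : E → ℝ} (hmin : IsMinOn (f + r) s a)
    (hr : ConvexOn ℝ s r) (ha : a ∈ s) (hb : b ∈ s) (hg : HasGradientAt f g₁ a) :
    r a - r b ≤ ⟪g₁, b - a⟫ := by
  have hderiv : HasDerivAt (fun t : ℝ => f (lineMap a b t)) ⟪g₁, b - a⟫ 0 :=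
    ((lineMap_apply_zero a b (k := ℝ)).symm ▸ hg).hasDerivAt_comp_lineMap
  refine ge_of_tendsto hderiv.tendsto_slope_zero_right ?_
  filter_upwards [Ioc_mem_nhdsGT zero_lt_one] with t ⟨ht₀, ht₁⟩
  have hle : f a + r a ≤ f (lineMap a b t) + r (lineMap a b t) :=
    hmin (hr.1.lineMap_mem ha hb ⟨ht₀.le, ht₁⟩)
  have hconv : r (lineMap a b t) ≤ (1 - t) * r a + t * r b := by
    simpa [lineMap_apply_module] using
      hr.2 ha hb (sub_nonneg.2 ht₁) ht₀.le (sub_add_cancel 1 t)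
  rw [zero_add, lineMap_apply_zero, smul_eq_mul, le_inv_mul_iff₀ ht₀]
  linarith

theorem IsProxPoint.inner_sub_le {r : E → ℝ} {η : ℝ} {w p : E} (hp : IsProxPoint r η w p)
    (hr : ConvexOn ℝ univ r) (hη : 0 < η) (u : E) : ⟪w - p, u - p⟫ ≤ η * (r u - r p) := by
  have hmin : IsMinOn ((fun z => 1 / (2 * η) * ‖z - w‖ ^ 2) + r) univ p :=
    isMinOn_univ_iff.2 fun u => by simp only [Pi.add_apply]; linarith [hp u]
  have := hmin.sub_le_inner_gradient hr (mem_univ p) (mem_univ u)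
    (hasGradientAt_const_mul_norm_sub_sq _ w p)
  rw [← neg_sub w p, smul_neg, inner_neg_left, real_inner_smul_left] at this
  field_simp at this
  linarith

end Convex

section Smooth

variable {f : E → ℝ} {f' : E → E} {L : ℝ}

theorem le_add_inner_gradient_add_of_lipschitz (hgrad : ∀ x, HasGradientAt f (f' x) x)
    (hLip : ∀ x y, ‖f' x - f' y‖ ≤ L * ‖x - y‖) (a b : E) :
    f b ≤ f a + ⟪f' a, b - a⟫ + L / 2 * ‖b - a‖ ^ 2 := by
  set φ : ℝ → ℝ := fun t => f (lineMap a b t) - t * ⟪f' a, b - a⟫ - L / 2 * t ^ 2 * ‖b - a‖ ^ 2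
  have hφ (t : ℝ) :
      HasDerivAt φ (⟪f' (lineMap a b t), b - a⟫ - ⟪f' a, b - a⟫ - L * t * ‖b - a‖ ^ 2) t := by
    have := (((hgrad (lineMap a b t)).hasDerivAt_comp_lineMap).sub
      ((hasDerivAt_id t).mul_const ⟪f' a, b - a⟫)).sub
      (((hasDerivAt_pow 2 t).const_mul (L / 2)).mul_const (‖b - a‖ ^ 2))
    refine this.congr_deriv ?_
    simp only [one_mul, Nat.cast_ofNat, Nat.add_one_sub_one, pow_one]
    ring
  have hφ' (t : ℝ) (ht : 0 < t) : deriv φ t ≤ 0 := by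
    rw [(hφ t).deriv, ← inner_sub_left]
    have hsub : lineMap a b t - a = t • (b - a) := lineMap_vsub_left a b t
    calc ⟪f' (lineMap a b t) - f' a, b - a⟫ - L * t * ‖b - a‖ ^ 2
        ≤ ‖f' (lineMap a b t) - f' a‖ * ‖b - a‖ - L * t * ‖b - a‖ ^ 2 := by
          gcongr; exact real_inner_le_norm _ _
      _ ≤ L * ‖lineMap a b t - a‖ * ‖b - a‖ - L * t * ‖b - a‖ ^ 2 := by
          gcongr; exact hLip _ _
      _ = 0 := by rw [hsub, norm_smul, Real.norm_of_nonneg ht.le]; ring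
  have hanti : AntitoneOn φ (Ici 0) := by
    refine antitoneOn_of_deriv_nonpos (convex_Ici 0)
      (fun t _ => (hφ t).continuousAt.continuousWithinAt)
      (fun t _ => (hφ t).differentiableAt.differentiableWithinAt) ?_
    rw [interior_Ici]
    exact hφ'
  have := hanti (mem_Ici.2 le_rfl) (mem_Ici.2 zero_le_one) zero_le_one
  simp only [lineMap_apply_one, lineMap_apply_zero, one_mul, one_pow, mul_one, zero_mul,
    sub_zero, ne_eq, OfNat.ofNat_ne_zero, not_false_eq_true, zero_pow, mul_zero, φ] at this
  linarith

theorem ConvexOn.sq_norm_gradient_sub_div_le (hf : ConvexOn ℝ univ f) (hL : 0 < L)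
    (hgrad : ∀ x, HasGradientAt f (f' x) x) (hLip : ∀ x y, ‖f' x - f' y‖ ≤ L * ‖x - y‖)
    (a b : E) : ‖f' b - f' a‖ ^ 2 / (2 * L) ≤ f b - f a - ⟪f' a, b - a⟫ := by
  set z := b - L⁻¹ • (f' b - f' a)
  have h₁ := hf.inner_gradient_le_sub (mem_univ a) (mem_univ z) (hgrad a)
  have h₂ := le_add_inner_gradient_add_of_lipschitz hgrad hLip b z
  have hz : z - b = -(L⁻¹ • (f' b - f' a)) := by simp [z]
  rw [show z - a = (b - a) + (z - b) by abel, inner_add_right, hz, inner_neg_right,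
    real_inner_smul_right] at h₁
  rw [hz, norm_neg, norm_smul, Real.norm_of_nonneg (inv_nonneg.2 hL.le), inner_neg_right,
    real_inner_smul_right] at h₂
  have hw : L⁻¹ * ⟪f' b, f' b - f' a⟫ - L⁻¹ * ⟪f' a, f' b - f' a⟫ = L⁻¹ * ‖f' b - f' a‖ ^ 2 := by
    rw [← mul_sub, ← inner_sub_left, real_inner_self_eq_norm_sq]
  have hsq : ‖f' b - f' a‖ ^ 2 / (2 * L)
      = L⁻¹ * ‖f' b - f' a‖ ^ 2 - L / 2 * (L⁻¹ * ‖f' b - f' a‖) ^ 2 := by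
    field_simp; ring
  linarith

theorem ConvexOn.sq_norm_gradient_sub_le_mul_inner (hf : ConvexOn ℝ univ f) (hL : 0 < L)
    (hgrad : ∀ x, HasGradientAt f (f' x) x) (hLip : ∀ x y, ‖f' x - f' y‖ ≤ L * ‖x - y‖)
    (a b : E) : ‖f' a - f' b‖ ^ 2 ≤ L * ⟪f' a - f' b, a - b⟫ := by
  have hab := hf.sq_norm_gradient_sub_div_le hL hgrad hLip a b
  have hba := hf.sq_norm_gradient_sub_div_le hL hgrad hLip b a
  rw [norm_sub_rev, ← neg_sub a b, inner_neg_right] at hab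
  have : ‖f' a - f' b‖ ^ 2 / L ≤ ⟪f' a - f' b, a - b⟫ := by
    rw [inner_sub_left, ← add_halves (‖f' a - f' b‖ ^ 2 / L), div_div, mul_comm L 2]
    linarith
  rwa [div_le_iff₀' hL] at this

end Smooth

end

theorem le_norm_of_inner_sub_nonneg {E : Type*} [NormedAddCommGroup E]
    [InnerProductSpace ℝ E] {d u e w : E} {α B L η : ℝ} (hB : 0 ≤ B) (hL : 0 < L)
    (hη : 0 < η) (hηL : η * L ≤ 2) (hdu : 0 ≤ ⟪d - η • (e + w), u - d⟫)
    (he : ‖e‖ ≤ B * ‖u‖) (hmono : α * ‖u‖ ^ 2 ≤ ⟪w, u⟫) (hcoco : ‖w‖ ^ 2 ≤ L * ⟪w, u⟫) :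
    η * (α - 2 * B) * ‖u‖ ≤ 2 * (1 + η * B) * ‖d‖ := by
  rw [show ⟪d - η • (e + w), u - d⟫
      = ⟪d, u⟫ - ‖d‖ ^ 2 - η * ⟪e, u⟫ + η * ⟪e, d⟫ - η * ⟪w, u⟫ + η * ⟪w, d⟫ by
    simp only [inner_sub_left, inner_sub_right, inner_add_left, real_inner_smul_left,
      real_inner_self_eq_norm_sq]
    ring] at hdu
  have hwd : 2 * ⟪w, d⟫ ≤ ⟪w, u⟫ + L * ‖d‖ ^ 2 := by
    -- `2L‖w‖‖d‖ ≤ ‖w‖² + L²‖d‖²`, then cocoercivity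
    have hamgm : 2 * L * (‖w‖ * ‖d‖) ≤ L * (⟪w, u⟫ + L * ‖d‖ ^ 2) := by
      nlinarith [sq_nonneg (‖w‖ - L * ‖d‖)]
    nlinarith [real_inner_le_norm w d]
  have hed : ⟪e, d⟫ ≤ B * ‖u‖ * ‖d‖ := (real_inner_le_norm e d).trans (by gcongr)
  have heu : -⟪e, u⟫ ≤ B * ‖u‖ * ‖u‖ := by
    rw [← inner_neg_left]
    exact (real_inner_le_norm _ u).trans (by rw [norm_neg]; gcongr)
  have hquad : η * α * ‖u‖ ^ 2 ≤ 2 * ‖u‖ * ((1 + η * B) * ‖d‖ + η * B * ‖u‖) := by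
    nlinarith [real_inner_le_norm d u, mul_le_mul_of_nonneg_left hed hη.le,
      mul_le_mul_of_nonneg_left heu hη.le, mul_le_mul_of_nonneg_left hwd hη.le,
      mul_le_mul_of_nonneg_left hmono hη.le, mul_le_mul_of_nonneg_right hηL (sq_nonneg ‖d‖)]
  rcases (norm_nonneg u).eq_or_lt with hu | hu
  · rw [← hu, mul_zero]; positivity
  · nlinarith

/-- **Lower bound on the prox-gradient displacement under a biased gradient.** In the
biased-oracle setting, for `0 < η ≤ 2/L`, `‖v − ∇f(y)‖ ≤ B‖y − x̄‖`,
`y⁺ = prox_{ηr}(y − ηv)` and `g̃ = (y − y⁺)/η`, with `α̂ = α − 2B`: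
`‖g̃‖ ≥ (α̂/(2(1 + ηB)))‖y − x̄‖`. -/
theorem prox_gradient_displacement_lower_bound
    {E : Type*} [NormedAddCommGroup E] [InnerProductSpace ℝ E] [FiniteDimensional ℝ E]
    (f : E → ℝ) (f' : E → E) (r : E → ℝ)
    (α L B : ℝ) (hα : 0 < α) (hL : 0 < L) (hB : 0 ≤ B)
    (hgrad : ∀ x : E, HasGradientAt f (f' x) x)
    (hsc : ConvexOn ℝ univ (fun x => f x - α / 2 * ‖x‖ ^ 2))
    (hLip : ∀ x y : E, ‖f' x - f' y‖ ≤ L * ‖x - y‖)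
    (hr : ConvexOn ℝ univ r)
    (xbar : E) (hxbar : ∀ y : E, f xbar + r xbar ≤ f y + r y)
    (η : ℝ) (hη0 : 0 < η) (hη : η ≤ 2 / L)
    (y v : E) (hv : ‖v - f' y‖ ≤ B * ‖y - xbar‖)
    (yp : E)
    (hyp : ∀ u : E, r yp + 1 / (2 * η) * ‖yp - (y - η • v)‖ ^ 2
      ≤ r u + 1 / (2 * η) * ‖u - (y - η • v)‖ ^ 2) :
    ‖η⁻¹ • (y - yp)‖ ≥ (α - 2 * B) / (2 * (1 + η * B)) * ‖y - xbar‖ := by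
  have hf : StrongConvexOn univ α f := strongConvexOn_iff_convex.2 hsc
  have hopt := (isMinOn_univ_iff.2 hxbar).sub_le_inner_gradient hr (mem_univ xbar)
    (mem_univ yp) (hgrad xbar)
  have hprox := IsProxPoint.inner_sub_le hyp hr hη0 xbar
  have hvar : 0 ≤ ⟪(y - yp) - η • ((v - f' y) + (f' y - f' xbar)), (y - xbar) - (y - yp)⟫ := by
    rw [show (y - yp) - η • ((v - f' y) + (f' y - f' xbar)) = (y - η • v - yp) + η • f' xbar by
      module, show (y - xbar) - (y - yp) = yp - xbar by abel, inner_add_left,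
      real_inner_smul_left]
    rw [← neg_sub yp xbar, inner_neg_right] at hprox
    linarith [mul_le_mul_of_nonneg_left hopt hη0.le]
  have hmono := hf.mul_sq_norm_sub_le_inner_gradient_sub (mem_univ y) (mem_univ xbar)
    (hgrad y) (hgrad xbar)
  have hconv : ConvexOn ℝ univ f := hf.convexOn fun t => mul_nonneg (half_pos hα).le (sq_nonneg t)
  have hcoco := hconv.sq_norm_gradient_sub_le_mul_inner hL hgrad hLip y xbar
  have hbound := le_norm_of_inner_sub_nonneg hB hL hη0 (by rwa [le_div_iff₀ hL] at hη) hvar hv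
    hmono hcoco
  rw [norm_smul, Real.norm_of_nonneg (inv_nonneg.2 hη0.le), ge_iff_le, div_mul_eq_mul_div,
    div_le_iff₀ (by positivity), inv_mul_eq_div, div_mul_eq_mul_div, le_div_iff₀ hη0]
  linarith
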